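/- Let A_1, A_2, A_3 be finite idempotent algebras of the same signature, let a_i, b_i ∈ A_i, and for i = 2,3 let θ_i be a congruence of Sg{a_i,b_i} in A_i such that b_i ∈ Sg{a_i, c} for every c ∈ b_i^{θ_i}. Let g be a ternary term of the common signature such that g^{A_1}(a_1,b_1,b_1) = b_1, g^{A_2}(b_2,a_2,b_2) θ_2 b_2, and g^{A_3}(b_3,b_3,a_3) θ_3 b_3. Then there exists a ternary term g′ such that g′^{A_1}(a_1,b_1,b_1) = b_1, g′^{A_2}(b_2,a_2,b_2) = b_2, and g′^{A_3}(b_3,b_3,a_3) = b_3. -/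

import Mathlib

namespace UA

/-- Terms over a signature `(ι, ar)` with `n` variables. -/
inductive Term (ι : Type) (ar : ι → ℕ) (n : ℕ) : Type where
  | var : Fin n → Term ι ar n
  | app : (i : ι) → (Fin (ar i) → Term ι ar n) → Term ι ar n

/-- Evaluation of a term in an algebra with operations `ops`. -/
def Term.eval {ι : Type} {ar : ι → ℕ} {A : Type} (ops : ∀ i : ι, (Fin (ar i) → A) → A)
    {n : ℕ} : Term ι ar n → (Fin n → A) → A
  | .var j, x => x j
  | .app i ts, x => ops i fun k => Term.eval ops (ts k) x

variable {ι : Type} {ar : ι → ℕ} {A : Type}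

/-- An algebra is idempotent if every basic operation is. -/
def Idempotent (ops : ∀ i : ι, (Fin (ar i) → A) → A) : Prop :=
  ∀ (i : ι) (x : A), ops i (fun _ => x) = x

/-- A subuniverse: a subset closed under all basic operations. -/
def IsSubuniverse (ops : ∀ i : ι, (Fin (ar i) → A) → A) (S : Set A) : Prop :=
  ∀ (i : ι) (xs : Fin (ar i) → A), (∀ k, xs k ∈ S) → ops i xs ∈ S

/-- The subuniverse generated by `X`. -/
def Sg (ops : ∀ i : ι, (Fin (ar i) → A) → A) (X : Set A) : Set A :=
  ⋂₀ {S | IsSubuniverse ops S ∧ X ⊆ S}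

/-- A tolerance: a reflexive symmetric compatible binary relation. -/
def IsTolerance (ops : ∀ i : ι, (Fin (ar i) → A) → A) (τ : A → A → Prop) : Prop :=
  (∀ x, τ x x) ∧ (∀ x y, τ x y → τ y x) ∧
  ∀ (i : ι) (xs ys : Fin (ar i) → A), (∀ k, τ (xs k) (ys k)) → τ (ops i xs) (ops i ys)

/-- A congruence: a compatible equivalence relation. -/
def IsCongruence (ops : ∀ i : ι, (Fin (ar i) → A) → A) (θ : A → A → Prop) : Prop :=
  Equivalence θ ∧
  ∀ (i : ι) (xs ys : Fin (ar i) → A), (∀ k, θ (xs k) (ys k)) → θ (ops i xs) (ops i ys)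

/-- A congruence of the subalgebra with universe `B`, viewed as a partial
equivalence relation on the big algebra whose domain is exactly `B` and which is
compatible with all operations. -/
def IsCongruenceOn (ops : ∀ i : ι, (Fin (ar i) → A) → A) (B : Set A)
    (θ : A → A → Prop) : Prop :=
  (∀ x y, θ x y → x ∈ B ∧ y ∈ B) ∧
  (∀ x ∈ B, θ x x) ∧
  (∀ x y, θ x y → θ y x) ∧
  (∀ x y z, θ x y → θ y z → θ x z) ∧
  ∀ (i : ι) (xs ys : Fin (ar i) → A), (∀ k, θ (xs k) (ys k)) → θ (ops i xs) (ops i ys)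

/-- `f` is a binary term operation of the algebra. -/
def IsTermOp2 (ops : ∀ i : ι, (Fin (ar i) → A) → A) (f : A → A → A) : Prop :=
  ∃ t : Term ι ar 2, ∀ x y, f x y = t.eval ops ![x, y]

/-- `g` is a ternary term operation of the algebra. -/
def IsTermOp3 (ops : ∀ i : ι, (Fin (ar i) → A) → A) (g : A → A → A → A) : Prop :=
  ∃ t : Term ι ar 3, ∀ x y z, g x y z = t.eval ops ![x, y, z]

/-- Connectivity of `a` and `b` in the hypergraph `H(A)` whose hyperedges are the
nonempty proper subuniverses: a chain of hyperedges with consecutive ones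
intersecting, the first containing `a`, the last containing `b`. -/
def HConnected (ops : ∀ i : ι, (Fin (ar i) → A) → A) (a b : A) : Prop :=
  ∃ L : List (Set A),
    (∀ S ∈ L, IsSubuniverse ops S ∧ S.Nonempty ∧ S ≠ Set.univ) ∧
    L.Chain' (fun S T => (S ∩ T).Nonempty) ∧
    ∃ h : L ≠ [], a ∈ L.head h ∧ b ∈ L.getLast h


/-!
Let `t` be a binary term with `t(a, c) = b`, which exists whenever `b ∈ Sg {a, c}`. If `c` is the
value of `g` at some tuple whose `k`-th entry is `a`, the ternary term `t(x_k, g)` takes the value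
`b` there. At a tuple whose `k`-th entry is `b` it sends a value `b` of `g` to `t(b, b) = b` by
idempotence, and a value `θ`-related to `b` to something `θ`-related to `t(b, b) = b` by
compatibility. Repairing first the second and then the third algebra in this way turns the
approximate identities for `g` into exact ones.
-/

def Compatible (ops : ∀ i : ι, (Fin (ar i) → A) → A) (θ : A → A → Prop) : Prop :=
  ∀ (i : ι) (xs ys : Fin (ar i) → A), (∀ k, θ (xs k) (ys k)) → θ (ops i xs) (ops i ys)

section IsCongruenceOn

variable {ops : ∀ i : ι, (Fin (ar i) → A) → A} {B : Set A} {θ : A → A → Prop}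

theorem IsCongruenceOn.refl (h : IsCongruenceOn ops B θ) {x : A} (hx : x ∈ B) : θ x x :=
  h.2.1 x hx

theorem IsCongruenceOn.symm (h : IsCongruenceOn ops B θ) {x y : A} (hxy : θ x y) : θ y x :=
  h.2.2.1 x y hxy

theorem IsCongruenceOn.compatible (h : IsCongruenceOn ops B θ) : Compatible ops θ :=
  h.2.2.2.2

end IsCongruenceOn

theorem subset_Sg (ops : ∀ i : ι, (Fin (ar i) → A) → A) (X : Set A) : X ⊆ Sg ops X :=
  fun _ hx _ hS => hS.2 hx

theorem compatible_eq (ops : ∀ i : ι, (Fin (ar i) → A) → A) : Compatible ops (· = ·) :=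
  fun i _ _ h => congrArg (ops i) (funext h)

def Term.subst {n m : ℕ} : Term ι ar n → (Fin n → Term ι ar m) → Term ι ar m
  | .var j, σ => σ j
  | .app i ts, σ => .app i fun k => (ts k).subst σ

section Eval

variable (ops : ∀ i : ι, (Fin (ar i) → A) → A)

theorem Term.eval_subst {n m : ℕ} (t : Term ι ar n) (σ : Fin n → Term ι ar m)
    (x : Fin m → A) : (t.subst σ).eval ops x = t.eval ops fun j => (σ j).eval ops x := by
  induction t with
  | var j => rfl
  | app i ts ih => exact congrArg (ops i) (funext ih)

theorem Term.eval_subst_pair {n : ℕ} (t : Term ι ar 2) (u v : Term ι ar n) (x : Fin n → A) :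
    (t.subst ![u, v]).eval ops x = t.eval ops ![u.eval ops x, v.eval ops x] := by
  rw [Term.eval_subst]
  congr 1
  funext j
  fin_cases j <;> rfl

theorem Term.eval_const (hid : Idempotent ops) {n : ℕ} (t : Term ι ar n) (x : A) :
    t.eval ops (fun _ => x) = x := by
  induction t with
  | var j => rfl
  | app i ts ih =>
    change ops i (fun k => (ts k).eval ops fun _ => x) = x
    rw [funext ih]
    exact hid i x

theorem Term.eval_pair_self (hid : Idempotent ops) (t : Term ι ar 2) (x : A) :
    t.eval ops ![x, x] = x := by
  have hconst : (![x, x] : Fin 2 → A) = fun _ => x := by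
    funext j
    fin_cases j <;> rfl
  rw [hconst, t.eval_const ops hid]

theorem Term.eval_rel {θ : A → A → Prop} (hθ : Compatible ops θ) {n : ℕ} (t : Term ι ar n)
    {xs ys : Fin n → A} (h : ∀ j, θ (xs j) (ys j)) : θ (t.eval ops xs) (t.eval ops ys) := by
  induction t with
  | var j => exact h j
  | app i ts ih => exact hθ i _ _ ih

theorem exists_term_eval_eq_of_mem_Sg {n : ℕ} (x : Fin n → A) {b : A}
    (hb : b ∈ Sg ops (Set.range x)) : ∃ t : Term ι ar n, t.eval ops x = b := by
  refine hb {y | ∃ t : Term ι ar n, t.eval ops x = y} ⟨?_, ?_⟩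
  · intro i xs hxs
    choose ts hts using hxs
    exact ⟨.app i ts, congrArg (ops i) (funext hts)⟩
  · rintro _ ⟨j, rfl⟩
    exact ⟨.var j, rfl⟩

theorem exists_term_subst_pair_eval_eq {n : ℕ} {a b : A} (u v : Term ι ar n) (x : Fin n → A)
    (hu : u.eval ops x = a) (hb : b ∈ Sg ops {a, v.eval ops x}) :
    ∃ t : Term ι ar 2, (t.subst ![u, v]).eval ops x = b := by
  rw [← Matrix.range_cons_cons_empty a (v.eval ops x) ![]] at hb
  obtain ⟨t, ht⟩ := exists_term_eval_eq_of_mem_Sg ops _ hb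
  exact ⟨t, by rw [Term.eval_subst_pair, hu, ht]⟩

theorem Term.rel_eval_subst_pair (hid : Idempotent ops) {θ : A → A → Prop}
    (hθ : Compatible ops θ) {n : ℕ} {b : A} (hb : θ b b) (t : Term ι ar 2)
    {u v : Term ι ar n} {x : Fin n → A} (hu : u.eval ops x = b) (hv : θ (v.eval ops x) b) :
    θ ((t.subst ![u, v]).eval ops x) b := by
  have hrel : θ (t.eval ops ![b, v.eval ops x]) (t.eval ops ![b, b]) :=
    t.eval_rel ops hθ fun j => by fin_cases j; exacts [hb, hv]
  rw [t.eval_pair_self ops hid b] at hrel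
  rwa [Term.eval_subst_pair, hu]

theorem Term.eval_subst_pair_of_eq (hid : Idempotent ops) {n : ℕ} {b : A} (t : Term ι ar 2)
    {u v : Term ι ar n} {x : Fin n → A} (hu : u.eval ops x = b) (hv : v.eval ops x = b) :
    (t.subst ![u, v]).eval ops x = b :=
  t.rel_eval_subst_pair ops hid (compatible_eq ops) rfl hu hv

end Eval

theorem stmt_14_general {ι : Type} {ar : ι → ℕ} {A1 A2 A3 : Type}
    (ops1 : ∀ i : ι, (Fin (ar i) → A1) → A1)
    (ops2 : ∀ i : ι, (Fin (ar i) → A2) → A2)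
    (ops3 : ∀ i : ι, (Fin (ar i) → A3) → A3)
    (hid1 : Idempotent ops1) (hid2 : Idempotent ops2) (hid3 : Idempotent ops3)
    (a1 b1 : A1) (a2 b2 : A2) (a3 b3 : A3)
    (θ2 : A2 → A2 → Prop)
    (hθ2 : IsCongruenceOn ops2 (Sg ops2 ({a2, b2} : Set A2)) θ2)
    (hgen2 : ∀ c, θ2 b2 c → b2 ∈ Sg ops2 ({a2, c} : Set A2))
    (θ3 : A3 → A3 → Prop)
    (hθ3 : IsCongruenceOn ops3 (Sg ops3 ({a3, b3} : Set A3)) θ3)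
    (hgen3 : ∀ c, θ3 b3 c → b3 ∈ Sg ops3 ({a3, c} : Set A3))
    (g : Term ι ar 3)
    (hg1 : g.eval ops1 ![a1, b1, b1] = b1)
    (hg2 : θ2 (g.eval ops2 ![b2, a2, b2]) b2)
    (hg3 : θ3 (g.eval ops3 ![b3, b3, a3]) b3) :
    ∃ g' : Term ι ar 3,
      g'.eval ops1 ![a1, b1, b1] = b1 ∧
      g'.eval ops2 ![b2, a2, b2] = b2 ∧
      g'.eval ops3 ![b3, b3, a3] = b3 := by
  have hb3 : b3 ∈ Sg ops3 ({a3, b3} : Set A3) := subset_Sg ops3 _ (by simp)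
  obtain ⟨t, ht2⟩ := exists_term_subst_pair_eval_eq ops2 (.var 1) g ![b2, a2, b2] rfl
    (hgen2 _ (hθ2.symm hg2))
  set g1 := t.subst ![.var 1, g]
  have ht1 : g1.eval ops1 ![a1, b1, b1] = b1 := t.eval_subst_pair_of_eq ops1 hid1 rfl hg1
  have ht3 : θ3 (g1.eval ops3 ![b3, b3, a3]) b3 :=
    t.rel_eval_subst_pair ops3 hid3 hθ3.compatible (hθ3.refl hb3) rfl hg3
  obtain ⟨s, hs3⟩ := exists_term_subst_pair_eval_eq ops3 (.var 2) g1 ![b3, b3, a3] rfl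
    (hgen3 _ (hθ3.symm ht3))
  exact ⟨s.subst ![.var 2, g1], s.eval_subst_pair_of_eq ops1 hid1 rfl ht1,
    s.eval_subst_pair_of_eq ops2 hid2 rfl ht2, hs3⟩

/-- interpolation of majority-style behaviour of a term across
three similar algebras (Lemma on thin majority triples). -/
theorem stmt_14 {ι : Type} {ar : ι → ℕ} {A1 A2 A3 : Type}
    [Fintype A1] [Nonempty A1] [Fintype A2] [Nonempty A2] [Fintype A3] [Nonempty A3]
    (ops1 : ∀ i : ι, (Fin (ar i) → A1) → A1)
    (ops2 : ∀ i : ι, (Fin (ar i) → A2) → A2)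
    (ops3 : ∀ i : ι, (Fin (ar i) → A3) → A3)
    (hid1 : Idempotent ops1) (hid2 : Idempotent ops2) (hid3 : Idempotent ops3)
    (a1 b1 : A1) (a2 b2 : A2) (a3 b3 : A3)
    (θ2 : A2 → A2 → Prop)
    (hθ2 : IsCongruenceOn ops2 (Sg ops2 ({a2, b2} : Set A2)) θ2)
    (hgen2 : ∀ c, θ2 b2 c → b2 ∈ Sg ops2 ({a2, c} : Set A2))
    (θ3 : A3 → A3 → Prop)
    (hθ3 : IsCongruenceOn ops3 (Sg ops3 ({a3, b3} : Set A3)) θ3)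
    (hgen3 : ∀ c, θ3 b3 c → b3 ∈ Sg ops3 ({a3, c} : Set A3))
    (g : Term ι ar 3)
    (hg1 : g.eval ops1 ![a1, b1, b1] = b1)
    (hg2 : θ2 (g.eval ops2 ![b2, a2, b2]) b2)
    (hg3 : θ3 (g.eval ops3 ![b3, b3, a3]) b3) :
    ∃ g' : Term ι ar 3,
      g'.eval ops1 ![a1, b1, b1] = b1 ∧
      g'.eval ops2 ![b2, a2, b2] = b2 ∧
      g'.eval ops3 ![b3, b3, a3] = b3 :=
  stmt_14_general ops1 ops2 ops3 hid1 hid2 hid3 a1 b1 a2 b2 a3 b3 θ2 hθ2 hgen2 θ3 hθ3 hgen3 g hg1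
    hg2 hg3

end UA
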